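/- For all integers n ≥ 0 and k ≥ 1, the determinant of the n×n matrix over ℚ with entries ((i+k+1)/(j+k))·binom(j+k, i-j+1) for 0 ≤ j ≤ i+1 and 0 for j > i+1, 0 ≤ i, j ≤ n-1, equals binom(2n+k-1, n). -/

import Mathlib

/-!
The superdiagonal entries are `1` and everything above them vanishes, so the matrix is lower
Hessenberg and expanding along the last column gives `D (n+1) = ∑ j, (-1)^(n+j) a n j D j`.
For `k = r + 1` the entries are `a n j = C(j+r+1, n+1-j) + C(j+r, n-j)`, and `D n = C(2n+r, n)`
follows once one knows that `altChooseSum r n = ∑_{i+j=n} (-1)^i C(i+r, j) C(2i+r, i)` equals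
`(-2)^n` for every `r`. The reason is that `∑ C(2i+r, i) tⁱ = c(t)^r / √(1-4t)` with `c` the
Catalan series, and at `t = -x(1+x)` one has `c(t) = 1/(1+x)` and `√(1-4t) = 1+2x`, so the
generating function `∑ₙ altChooseSum r n xⁿ = (1+x)^r ∑ C(2i+r, i) tⁱ` is `1/(1+2x)`.
Coefficientwise this comes down to two recurrences:
`C(2i+2, i+1) = 2 C(2i+1, i)` gives `altChooseSum 0 (n+1) = -2 altChooseSum 1 n`, and
Pascal's rule in both binomials relates `altChooseSum (r+1) (n+1)` to lower values.
-/

open Finset Matrix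

section Hessenberg

variable {R : Type*} [CommRing R] {a : ℕ → ℕ → R}

theorem det_updateRow_last_succ_of_lowerHessenberg (h1 : ∀ i, a i (i + 1) = 1)
    (h0 : ∀ i j, i + 1 < j → a i j = 0) (v : ℕ → R) (m : ℕ) :
    ((of fun i j : Fin (m + 2) => a i j).updateRow (Fin.last _) fun j => v j).det =
      v (m + 1) * (of fun i j : Fin (m + 1) => a i j).det -
        ((of fun i j : Fin (m + 1) => a i j).updateRow (Fin.last _) fun j => v j).det := by
  rw [det_succ_column _ (Fin.last (m + 1)), Fin.sum_univ_castSucc, Fin.sum_univ_castSucc]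
  have hminor_last :
      ((of fun i j : Fin (m + 2) => a i j).updateRow (Fin.last _) fun j => v j).submatrix
        Fin.castSucc Fin.castSucc = of fun i j : Fin (m + 1) => a i j := by
    ext i j
    simp [updateRow_apply, Fin.castSucc_ne_last]
  have hminor_prev :
      ((of fun i j : Fin (m + 2) => a i j).updateRow (Fin.last _) fun j => v j).submatrix
        (Fin.last m).castSucc.succAbove Fin.castSucc =
      (of fun i j : Fin (m + 1) => a i j).updateRow (Fin.last _) fun j => v j := by
    ext i j
    rcases Fin.eq_castSucc_or_eq_last i with ⟨i, rfl⟩ | rfl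
    · simp [updateRow_apply, Fin.castSucc_ne_last,
        Fin.succAbove_of_castSucc_lt _ _ (Fin.castSucc_lt_castSucc_iff.2 i.castSucc_lt_last)]
    · simp [updateRow_apply]
  have hcol : ∀ i : Fin m, a i (m + 1) = 0 := fun i => h0 _ _ (by omega)
  have hodd : (-1 : R) ^ (m + (m + 1)) = -1 := Odd.neg_one_pow ⟨m, by ring⟩
  have heven : (-1 : R) ^ (m + 1 + (m + 1)) = 1 := Even.neg_one_pow ⟨m + 1, rfl⟩
  simp only [Fin.val_castSucc, Fin.val_last, updateRow_apply, Fin.castSucc_ne_last, ↓reduceIte,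
    of_apply, hcol, mul_zero, Fin.succAbove_last, zero_mul, sum_const_zero, hodd, h1, mul_one,
    hminor_prev, neg_mul, one_mul, zero_add, heven, hminor_last]
  ring

theorem det_updateRow_last_of_lowerHessenberg (h1 : ∀ i, a i (i + 1) = 1)
    (h0 : ∀ i j, i + 1 < j → a i j = 0) (v : ℕ → R) (m : ℕ) :
    ((of fun i j : Fin (m + 1) => a i j).updateRow (Fin.last _) fun j => v j).det =
      ∑ j ∈ range (m + 1), (-1) ^ (m + j) * v j * (of fun i j : Fin j => a i j).det := by
  induction m with
  | zero => simp
  | succ m ih =>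
    rw [det_updateRow_last_succ_of_lowerHessenberg h1 h0, ih, sum_range_succ _ (m + 1),
      ← two_mul, pow_mul, neg_one_sq, one_pow, one_mul, sub_eq_neg_add, ← sum_neg_distrib]
    congr 1
    refine sum_congr rfl fun j _ => ?_
    ring

theorem det_succ_of_lowerHessenberg (h1 : ∀ i, a i (i + 1) = 1)
    (h0 : ∀ i j, i + 1 < j → a i j = 0) (n : ℕ) :
    (of fun i j : Fin (n + 1) => a i j).det =
      ∑ j ∈ range (n + 1), (-1) ^ (n + j) * a n j * (of fun i j : Fin j => a i j).det := by
  rw [← det_updateRow_last_of_lowerHessenberg h1 h0]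
  exact congrArg det (updateRow_eq_self _ (Fin.last n)).symm

end Hessenberg

theorem Nat.choose_two_mul_succ_succ (n : ℕ) :
    (2 * (n + 1)).choose (n + 1) = 2 * (2 * n + 1).choose n := by
  rw [show 2 * (n + 1) = 2 * n + 1 + 1 by ring, Nat.choose_succ_succ, Nat.choose_symm_half,
    ← two_mul]

def altChooseSum (r n : ℕ) : ℤ :=
  ∑ p ∈ antidiagonal n, (-1 : ℤ) ^ p.1 * (p.1 + r).choose p.2 * (2 * p.1 + r).choose p.1

theorem altChooseSum_zero_right (r : ℕ) : altChooseSum r 0 = 1 := by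
  simp [altChooseSum]

theorem altChooseSum_zero_succ (n : ℕ) : altChooseSum 0 (n + 1) = -2 * altChooseSum 1 n := by
  rw [altChooseSum, altChooseSum, Nat.sum_antidiagonal_succ, mul_sum]
  simp only [Nat.choose_zero_succ, Nat.cast_zero, mul_zero, zero_mul, zero_add, add_zero]
  refine sum_congr rfl fun p _ => ?_
  rw [Nat.choose_two_mul_succ_succ]
  push_cast; ring

theorem sum_antidiagonal_choose_succ (r n : ℕ) :
    ∑ p ∈ antidiagonal (n + 1),
        (-1 : ℤ) ^ p.1 * (p.1 + r + 1).choose p.2 * (2 * p.1 + r).choose p.1 =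
      altChooseSum r (n + 1) + altChooseSum r n := by
  rw [altChooseSum, altChooseSum, Nat.sum_antidiagonal_succ', Nat.sum_antidiagonal_succ']
  simp only [Nat.choose_succ_succ', Nat.choose_zero_right, Nat.cast_add, mul_add, add_mul,
    sum_add_distrib]
  ring

theorem altChooseSum_succ_succ (r n : ℕ) :
    altChooseSum (r + 1) (n + 1) =
      ∑ p ∈ antidiagonal (n + 1),
          (-1 : ℤ) ^ p.1 * (p.1 + r + 1).choose p.2 * (2 * p.1 + r).choose p.1 -
        altChooseSum (r + 2) n := by
  rw [altChooseSum, altChooseSum, Nat.sum_antidiagonal_succ, Nat.sum_antidiagonal_succ,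
    eq_sub_iff_add_eq, add_assoc, ← sum_add_distrib]
  simp only [zero_add, mul_zero, Nat.choose_zero_right]
  congr 1
  refine sum_congr rfl fun p _ => ?_
  rw [show p.1 + 1 + (r + 1) = p.1 + (r + 2) by ring,
    show p.1 + 1 + r + 1 = p.1 + (r + 2) by ring,
    show 2 * (p.1 + 1) + (r + 1) = 2 * p.1 + (r + 2) + 1 by ring, Nat.choose_succ_succ',
    show 2 * (p.1 + 1) + r = 2 * p.1 + (r + 2) by ring]
  push_cast; ring

theorem altChooseSum_eq (r n : ℕ) : altChooseSum r n = (-2) ^ n := by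
  induction n generalizing r with
  | zero => exact altChooseSum_zero_right r
  | succ n ihn =>
    induction r with
    | zero => rw [altChooseSum_zero_succ, ihn, pow_succ']
    | succ r ihr =>
      rw [altChooseSum_succ_succ, sum_antidiagonal_choose_succ, ihr, ihn, ihn]
      ring

theorem sum_range_neg_one_pow_mul_choose_mul_choose (r N : ℕ) :
    ∑ j ∈ range (N + 1), (-1 : ℤ) ^ (N + j) *
        ((j + r + 1).choose (N + 1 - j) + (j + r).choose (N - j) : ℕ) * (2 * j + r).choose j =
      (2 * (N + 1) + r).choose (N + 1) := by
  have hZ := altChooseSum_eq r N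
  have hY := sum_antidiagonal_choose_succ r N
  rw [altChooseSum_eq, altChooseSum_eq] at hY
  rw [altChooseSum, Nat.sum_antidiagonal_eq_sum_range_succ
    (fun i j => (-1 : ℤ) ^ i * (i + r).choose j * (2 * i + r).choose i)] at hZ
  rw [Nat.sum_antidiagonal_eq_sum_range_succ
    (fun i j => (-1 : ℤ) ^ i * (i + r + 1).choose j * (2 * i + r).choose i), sum_range_succ,
    Nat.sub_self, Nat.choose_zero_right] at hY
  have hsplit : ∑ j ∈ range (N + 1), (-1 : ℤ) ^ (N + j) *
        ((j + r + 1).choose (N + 1 - j) + (j + r).choose (N - j) : ℕ) * (2 * j + r).choose j =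
      (-1) ^ N *
        (∑ j ∈ range (N + 1),
            (-1 : ℤ) ^ j * (j + r + 1).choose (N + 1 - j) * (2 * j + r).choose j +
          ∑ j ∈ range (N + 1),
            (-1 : ℤ) ^ j * (j + r).choose (N - j) * (2 * j + r).choose j) := by
    rw [← sum_add_distrib, mul_sum]
    refine sum_congr rfl fun j _ => ?_
    push_cast; ring
  have hsq : (-1 : ℤ) ^ N * (-1) ^ N = 1 := by rw [← mul_pow]; norm_num
  rw [hsplit, hZ]
  linear_combination (-1 : ℤ) ^ N * hY + ((2 * (N + 1) + r).choose (N + 1) : ℤ) * hsq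

def binomEntry (k i j : ℕ) : ℚ :=
  if j ≤ i + 1 then
    (((i + k + 1 : ℕ) : ℚ) / ((j + k : ℕ) : ℚ)) * ((j + k).choose (i + 1 - j) : ℚ)
  else 0

theorem binomEntry_self_succ (k i : ℕ) : binomEntry k i (i + 1) = 1 := by
  rw [binomEntry, if_pos le_rfl, Nat.sub_self, Nat.choose_zero_right, Nat.cast_one, mul_one,
    add_right_comm, div_self (by positivity)]

theorem binomEntry_eq_zero_of_lt (k : ℕ) {i j : ℕ} (h : i + 1 < j) : binomEntry k i j = 0 :=
  if_neg (by omega)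

theorem binomEntry_succ_of_le (r : ℕ) {N j : ℕ} (hj : j ≤ N) :
    binomEntry (r + 1) N j = ((j + r + 1).choose (N + 1 - j) + (j + r).choose (N - j) : ℕ) := by
  obtain ⟨m, rfl⟩ := Nat.exists_eq_add_of_le hj
  rw [binomEntry, if_pos (by omega), show j + m + 1 - j = m + 1 by omega,
    show j + m - j = m by omega]
  have key := Nat.add_one_mul_choose_eq (j + r) m
  have hpos : ((j + (r + 1) : ℕ) : ℚ) ≠ 0 := by positivity
  rw [div_mul_eq_mul_div, div_eq_iff hpos, show j + (r + 1) = j + r + 1 by ring]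
  push_cast
  have keyq : ((j + r : ℚ) + 1) * (j + r).choose m = (j + r + 1).choose (m + 1) * (m + 1) := by
    exact_mod_cast key
  linear_combination -keyq

theorem det_binomEntry (r n : ℕ) :
    (of fun i j : Fin n => binomEntry (r + 1) i j).det = (2 * n + r).choose n := by
  induction n using Nat.strong_induction_on with
  | _ n ih =>
    rcases n with _ | N
    · simp
    rw [det_succ_of_lowerHessenberg (binomEntry_self_succ (r + 1))
      (fun _ _ => binomEntry_eq_zero_of_lt (r + 1)) N]
    calc _ = ∑ j ∈ range (N + 1), (-1 : ℚ) ^ (N + j) *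
          ((j + r + 1).choose (N + 1 - j) + (j + r).choose (N - j) : ℕ) * (2 * j + r).choose j :=
          sum_congr rfl fun j hj => by
            have hj : j < N + 1 := mem_range.1 hj
            rw [binomEntry_succ_of_le r (Nat.lt_succ_iff.1 hj), ih j hj]
      _ = _ := by exact_mod_cast sum_range_neg_one_pow_mul_choose_mul_choose r N

theorem stmt_9 (n k : ℕ) (hk : 1 ≤ k) :
    Matrix.det (Matrix.of fun i j : Fin n =>
        if (j : ℕ) ≤ (i : ℕ) + 1 then
          ((((i : ℕ) + k + 1 : ℕ) : ℚ) / (((j : ℕ) + k : ℕ) : ℚ)) *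
            (Nat.choose ((j : ℕ) + k) ((i : ℕ) + 1 - (j : ℕ)) : ℚ)
        else 0)
      = (Nat.choose (2 * n + k - 1) n : ℚ) := by
  obtain ⟨r, rfl⟩ := Nat.exists_eq_add_of_le' hk
  rw [show 2 * n + (r + 1) - 1 = 2 * n + r by omega]
  exact det_binomEntry r n
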